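/- Assume the strengthened Legendre condition (L'): R(t) is positive definite for every t ∈ [0,T]; set A = −R⁻¹Q, B = R⁻¹, C = P − QᵀR⁻¹Q. Assume condition (SR): there exists a C¹ matrix function W : [0,T] → ℝ^{n×n} with W(t) symmetric for all t, solving the Riccati differential equation Ẇ − C + WA + AᵀW + WBW = 0 on all of [0,T], and such that W(T) − W(0) is positive definite. Then Q(v) > 0 for every nonzero v in the space V of C¹ T-periodic functions with v(0) = v(T). -/

import Mathlib

/-!
Completing the square with the Riccati solution `W`: pointwise, the integrand equals
`z ⬝ᵥ R z` with `z = v̇ + R⁻¹(Q - W) v`, plus the derivative of `v ⬝ᵥ W v`. By periodicity,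
`Q(v) = ∫ z ⬝ᵥ R z + v(0) ⬝ᵥ (W(T) - W(0)) v(0)`. Both terms are nonnegative and the boundary
term is positive unless `v(0) = 0`; in that case `z` cannot vanish identically, since the linear
equation `v̇ = -R⁻¹(Q - W) v` with `v(0) = 0` forces `v = 0` by Grönwall.
-/

open Matrix Set intervalIntegral MeasureTheory

section Continuity

variable {X m n R : Type*} [TopologicalSpace X] {s : Set X}

theorem continuousOn_matrix [TopologicalSpace R] {M : X → Matrix m n R}
    (hM : ∀ i j, ContinuousOn (fun x => M x i j) s) : ContinuousOn M s :=
  continuousOn_pi.2 fun i => continuousOn_pi.2 (hM i)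

variable [Fintype n] [NonUnitalNonAssocSemiring R] [TopologicalSpace R] [ContinuousAdd R]
  [ContinuousMul R]

theorem ContinuousOn.dotProduct {u v : X → n → R} (hu : ContinuousOn u s)
    (hv : ContinuousOn v s) : ContinuousOn (fun x => u x ⬝ᵥ v x) s :=
  (continuous_fst.dotProduct continuous_snd).comp_continuousOn (hu.prodMk hv)

theorem ContinuousOn.matrix_mulVec {M : X → Matrix m n R} {v : X → n → R}
    (hM : ContinuousOn M s) (hv : ContinuousOn v s) : ContinuousOn (fun x => M x *ᵥ v x) s :=
  (continuous_fst.matrix_mulVec continuous_snd).comp_continuousOn (hM.prodMk hv)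

end Continuity

theorem ContinuousOn.matrix_inv {X n K : Type*} [TopologicalSpace X] [Fintype n] [DecidableEq n]
    [Field K] [TopologicalSpace K] [IsTopologicalDivisionRing K]
    {M : X → Matrix n n K} {s : Set X} (hM : ContinuousOn M s)
    (hdet : ∀ x ∈ s, (M x).det ≠ 0) : ContinuousOn (fun x => (M x)⁻¹) s := fun x hx =>
  have hinv : ContinuousAt Ring.inverse (M x).det := by
    simpa only [Ring.inverse_eq_inv'] using continuousAt_inv₀ (hdet x hx)
  (continuousAt_matrix_inv _ hinv).comp_continuousWithinAt (hM x hx)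

section Algebra

variable {ι α : Type*} [Fintype ι] [DecidableEq ι] [CommRing α]

theorem riccati_rhs_eq (P Q R W : Matrix ι ι α) (hR : Rᵀ = R) (hW : Wᵀ = W) :
    P - Qᵀ * R⁻¹ * Q - W * (-R⁻¹ * Q) - (-R⁻¹ * Q)ᵀ * W - W * R⁻¹ * W
      = P - (Q - W)ᵀ * R⁻¹ * (Q - W) := by
  have hRinv : (R⁻¹)ᵀ = R⁻¹ := by rw [transpose_nonsing_inv, hR]
  simp only [transpose_neg, transpose_mul, transpose_sub, hRinv, hW]
  noncomm_ring

theorem add_inv_mul_mulVec_dotProduct_mulVec {R : Matrix ι ι α} (hR : Rᵀ = R)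
    (hdet : IsUnit R.det) (S : Matrix ι ι α) (x y : ι → α) :
    (y + (R⁻¹ * S) *ᵥ x) ⬝ᵥ R *ᵥ (y + (R⁻¹ * S) *ᵥ x)
      = y ⬝ᵥ R *ᵥ y + 2 * (y ⬝ᵥ S *ᵥ x) + x ⬝ᵥ (Sᵀ * R⁻¹ * S) *ᵥ x := by
  have hRS : R *ᵥ (R⁻¹ * S) *ᵥ x = S *ᵥ x := by
    rw [mulVec_mulVec, mul_nonsing_inv_cancel_left _ _ hdet]
  have hcross : (R⁻¹ * S) *ᵥ x ⬝ᵥ R *ᵥ y = y ⬝ᵥ S *ᵥ x := by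
    rw [← dotProduct_transpose_mulVec, hR, hRS]
  have hsq : (R⁻¹ * S) *ᵥ x ⬝ᵥ R *ᵥ (R⁻¹ * S) *ᵥ x = x ⬝ᵥ (Sᵀ * R⁻¹ * S) *ᵥ x := by
    rw [hRS, ← dotProduct_transpose_mulVec, mulVec_mulVec, mul_assoc]
  rw [mulVec_add, dotProduct_add, add_dotProduct, add_dotProduct, hsq, hcross, hRS]
  ring

theorem quadForm_eq_sq_add_riccati {P Q R W : Matrix ι ι α} (hR : Rᵀ = R) (hdet : IsUnit R.det)
    (hW : Wᵀ = W) (x y : ι → α) :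
    x ⬝ᵥ P *ᵥ x + 2 * (y ⬝ᵥ Q *ᵥ x) + y ⬝ᵥ R *ᵥ y
      = (y + (R⁻¹ * (Q - W)) *ᵥ x) ⬝ᵥ R *ᵥ (y + (R⁻¹ * (Q - W)) *ᵥ x)
        + (y ⬝ᵥ W *ᵥ x + x ⬝ᵥ (P - (Q - W)ᵀ * R⁻¹ * (Q - W)) *ᵥ x + x ⬝ᵥ W *ᵥ y) := by
  have hWxy : x ⬝ᵥ W *ᵥ y = y ⬝ᵥ W *ᵥ x := by
    simpa only [hW] using dotProduct_transpose_mulVec W x y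
  rw [add_inv_mul_mulVec_dotProduct_mulVec hR hdet, hWxy, sub_mulVec, dotProduct_sub,
    sub_mulVec, dotProduct_sub]
  ring

end Algebra

theorem HasDerivAt.dotProduct_mulVec {ι κ : Type*} [Fintype ι] [Fintype κ] {x : ℝ → ι → ℝ}
    {M : ℝ → Matrix ι κ ℝ} {y : ℝ → κ → ℝ} {x' : ι → ℝ} {M' : Matrix ι κ ℝ} {y' : κ → ℝ}
    {t : ℝ} (hx : HasDerivAt x x' t) (hM : ∀ i j, HasDerivAt (fun s => M s i j) (M' i j) t)
    (hy : HasDerivAt y y' t) :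
    HasDerivAt (fun s => x s ⬝ᵥ M s *ᵥ y s)
      (x' ⬝ᵥ M t *ᵥ y t + x t ⬝ᵥ M' *ᵥ y t + x t ⬝ᵥ M t *ᵥ y') t := by
  have hsum : HasDerivAt (fun s => ∑ i, ∑ j, x s i * (M s i j * y s j))
      (∑ i, ∑ j, (x' i * (M t i j * y t j) + x t i * (M' i j * y t j + M t i j * y' j))) t :=
    .fun_sum fun i _ => .fun_sum fun j _ =>
      (hasDerivAt_pi.1 hx i).mul ((hM i j).mul (hasDerivAt_pi.1 hy j))
  convert hsum using 1
  · ext s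
    simp only [dotProduct, mulVec, Finset.mul_sum]
  · simp only [dotProduct, mulVec, Finset.mul_sum, ← Finset.sum_add_distrib]
    exact Finset.sum_congr rfl fun i _ => Finset.sum_congr rfl fun j _ => by ring

section LinearODE

variable {ι : Type*} [Fintype ι]

attribute [local instance] Matrix.linftyOpNormedAddCommGroup

theorem eq_zero_of_hasDerivAt_eq_mulVec {M : ℝ → Matrix ι ι ℝ} {x : ℝ → ι → ℝ} {a b : ℝ}
    (hM : ContinuousOn M (Icc a b)) (hx : ∀ t ∈ Icc a b, HasDerivAt x (M t *ᵥ x t) t)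
    (ha : x a = 0) : ∀ t ∈ Icc a b, x t = 0 := by
  obtain ⟨K, hK⟩ := isCompact_Icc.exists_bound_of_continuousOn hM
  refine eq_zero_of_abs_deriv_le_mul_abs_self_of_eq_zero_right (K := K)
    (fun t ht => (hx t ht).continuousAt.continuousWithinAt)
    (fun t ht => (hx t (Ico_subset_Icc_self ht)).hasDerivWithinAt) ha fun t ht => ?_
  exact (linfty_opNorm_mulVec _ _).trans
    (mul_le_mul_of_nonneg_right (hK t (Ico_subset_Icc_self ht)) (norm_nonneg _))

end LinearODE

theorem Matrix.PosDef.dotProduct_mulVec_self_nonneg {ι : Type*} [Fintype ι]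
    {D : Matrix ι ι ℝ} (hD : D.PosDef) (x : ι → ℝ) : 0 ≤ x ⬝ᵥ D *ᵥ x := by
  simpa only [star_trivial] using hD.posSemidef.dotProduct_mulVec_nonneg x

theorem Matrix.PosDef.dotProduct_mulVec_self_pos {ι : Type*} [Fintype ι]
    {D : Matrix ι ι ℝ} (hD : D.PosDef) {x : ι → ℝ} (hx : x ≠ 0) : 0 < x ⬝ᵥ D *ᵥ x := by
  simpa only [star_trivial] using hD.dotProduct_mulVec_pos hx

section QuadraticFunctional

variable {ι : Type*} [Fintype ι] {P Q R W : ℝ → Matrix ι ι ℝ} {v : ℝ → ι → ℝ} {a b : ℝ}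

theorem integral_quadForm_eq_integral_sq_add [DecidableEq ι] (hab : a ≤ b)
    (hP : ContinuousOn P (Icc a b)) (hQ : ContinuousOn Q (Icc a b))
    (hR : ContinuousOn R (Icc a b))
    (hRs : ∀ t ∈ Icc a b, (R t)ᵀ = R t) (hRdet : ∀ t ∈ Icc a b, IsUnit (R t).det)
    (hWs : ∀ t ∈ Icc a b, (W t)ᵀ = W t)
    (hW : ∀ t ∈ Icc a b, ∀ i j, HasDerivAt (fun s => W s i j)
      ((P t - (Q t - W t)ᵀ * (R t)⁻¹ * (Q t - W t)) i j) t)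
    (hv : ContDiff ℝ 1 v) :
    ∫ t in a..b, (v t ⬝ᵥ P t *ᵥ v t + 2 * (deriv v t ⬝ᵥ Q t *ᵥ v t)
        + deriv v t ⬝ᵥ R t *ᵥ deriv v t)
      = (∫ t in a..b, (deriv v t + ((R t)⁻¹ * (Q t - W t)) *ᵥ v t) ⬝ᵥ
          R t *ᵥ (deriv v t + ((R t)⁻¹ * (Q t - W t)) *ᵥ v t))
        + (v b ⬝ᵥ W b *ᵥ v b - v a ⬝ᵥ W a *ᵥ v a) := by
  set L := fun t => v t ⬝ᵥ P t *ᵥ v t + 2 * (deriv v t ⬝ᵥ Q t *ᵥ v t)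
    + deriv v t ⬝ᵥ R t *ᵥ deriv v t
  set z := fun t => deriv v t + ((R t)⁻¹ * (Q t - W t)) *ᵥ v t
  have hv' : ∀ t, HasDerivAt v (deriv v t) t :=
    fun t => (hv.differentiable one_ne_zero t).hasDerivAt
  have hvc : ContinuousOn v (Icc a b) := hv.continuous.continuousOn
  have hv'c : ContinuousOn (deriv v) (Icc a b) := (hv.continuous_deriv le_rfl).continuousOn
  have hWc : ContinuousOn W (Icc a b) :=
    continuousOn_matrix fun i j t ht => (hW t ht i j).continuousAt.continuousWithinAt
  have hRinv : ContinuousOn (fun t => (R t)⁻¹) (Icc a b) :=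
    hR.matrix_inv fun t ht => (hRdet t ht).ne_zero
  have hzc : ContinuousOn z (Icc a b) :=
    hv'c.add ((hRinv.mul (hQ.sub hWc)).matrix_mulVec hvc)
  have hLc : ContinuousOn L (Icc a b) :=
    ((hvc.dotProduct (hP.matrix_mulVec hvc)).add (continuousOn_const.mul
      (hv'c.dotProduct (hQ.matrix_mulVec hvc)))).add (hv'c.dotProduct (hR.matrix_mulVec hv'c))
  have hEi : IntervalIntegrable (fun t => z t ⬝ᵥ R t *ᵥ z t) volume a b :=
    (hzc.dotProduct (hR.matrix_mulVec hzc)).intervalIntegrable_of_Icc hab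
  have hrest : IntervalIntegrable (fun t => L t - z t ⬝ᵥ R t *ᵥ z t) volume a b :=
    (hLc.intervalIntegrable_of_Icc hab).sub hEi
  have hF : ∀ t ∈ uIcc a b,
      HasDerivAt (fun s => v s ⬝ᵥ W s *ᵥ v s) (L t - z t ⬝ᵥ R t *ᵥ z t) t := by
    intro t ht
    rw [uIcc_of_le hab] at ht
    convert (hv' t).dotProduct_mulVec (hW t ht) (hv' t) using 1
    simp only [L, z, quadForm_eq_sq_add_riccati (hRs t ht) (hRdet t ht) (hWs t ht)]
    ring
  calc ∫ t in a..b, L t = ∫ t in a..b, (z t ⬝ᵥ R t *ᵥ z t + (L t - z t ⬝ᵥ R t *ᵥ z t)) := by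
        simp only [add_sub_cancel]
    _ = _ := by rw [integral_add hEi hrest, integral_eq_sub_of_hasDerivAt hF hrest]

theorem integral_sq_pos_of_eq_zero {M : ℝ → Matrix ι ι ℝ} (hab : a < b)
    (hR : ContinuousOn R (Icc a b)) (hRpos : ∀ t ∈ Icc a b, (R t).PosDef)
    (hM : ContinuousOn M (Icc a b)) (hv : ContDiff ℝ 1 v) (ha : v a = 0)
    (hne : ∃ t ∈ Icc a b, v t ≠ 0) :
    0 < ∫ t in a..b, (deriv v t + M t *ᵥ v t) ⬝ᵥ R t *ᵥ (deriv v t + M t *ᵥ v t) := by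
  set z := fun t => deriv v t + M t *ᵥ v t
  have hzc : ContinuousOn z (Icc a b) :=
    (hv.continuous_deriv le_rfl).continuousOn.add (hM.matrix_mulVec hv.continuous.continuousOn)
  obtain ⟨c, hc, hzc_ne⟩ : ∃ c ∈ Icc a b, z c ≠ 0 := by
    by_contra! hz
    obtain ⟨t, ht, hvt⟩ := hne
    refine hvt (eq_zero_of_hasDerivAt_eq_mulVec (M := fun t => -M t) hM.neg (fun t ht => ?_)
      ha t ht)
    rw [neg_mulVec, ← eq_neg_of_add_eq_zero_left (hz t ht)]
    exact (hv.differentiable one_ne_zero t).hasDerivAt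
  refine integral_pos hab (hzc.dotProduct (hR.matrix_mulVec hzc))
    (fun t ht => (hRpos t (Ioc_subset_Icc_self ht)).dotProduct_mulVec_self_nonneg (z t))
    ⟨c, hc, (hRpos c hc).dotProduct_mulVec_self_pos hzc_ne⟩

theorem integral_sq_add_pos {M : ℝ → Matrix ι ι ℝ} {D : Matrix ι ι ℝ} (hab : a < b)
    (hR : ContinuousOn R (Icc a b)) (hRpos : ∀ t ∈ Icc a b, (R t).PosDef)
    (hM : ContinuousOn M (Icc a b)) (hD : D.PosDef) (hv : ContDiff ℝ 1 v)
    (hne : ∃ t ∈ Icc a b, v t ≠ 0) :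
    0 < (∫ t in a..b, (deriv v t + M t *ᵥ v t) ⬝ᵥ R t *ᵥ (deriv v t + M t *ᵥ v t))
      + v a ⬝ᵥ D *ᵥ v a := by
  rcases eq_or_ne (v a) 0 with ha | ha
  · rw [ha, zero_dotProduct, add_zero]
    exact integral_sq_pos_of_eq_zero hab hR hRpos hM hv ha hne
  · exact add_pos_of_nonneg_of_pos
      (integral_nonneg hab.le fun t ht => (hRpos t ht).dotProduct_mulVec_self_nonneg _)
      (hD.dotProduct_mulVec_self_pos ha)

end QuadraticFunctional

theorem stmt_5_general (n : ℕ) (T : ℝ) (hT : 0 < T)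
    (P Q R : ℝ → Matrix (Fin n) (Fin n) ℝ)
    (hPc : ∀ i j, ContDiffOn ℝ 1 (fun t => P t i j) (Icc 0 T))
    (hQc : ∀ i j, ContDiffOn ℝ 1 (fun t => Q t i j) (Icc 0 T))
    (hRc : ∀ i j, ContDiffOn ℝ 1 (fun t => R t i j) (Icc 0 T))
    (hL' : ∀ t ∈ Icc (0:ℝ) T, (R t).PosDef)
    (A B C : ℝ → Matrix (Fin n) (Fin n) ℝ)
    (hA : ∀ t, A t = -(R t)⁻¹ * Q t)
    (hB : ∀ t, B t = (R t)⁻¹)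
    (hC : ∀ t, C t = P t - (Q t)ᵀ * (R t)⁻¹ * Q t)
    (W : ℝ → Matrix (Fin n) (Fin n) ℝ)
    (hWs : ∀ t ∈ Icc (0:ℝ) T, (W t).IsSymm)
    (hW : ∀ t ∈ Icc (0:ℝ) T, ∀ i j,
      HasDerivAt (fun s => W s i j)
        ((C t - W t * A t - (A t)ᵀ * W t - W t * B t * W t) i j) t)
    (hWbc : (W T - W 0).PosDef) :
    ∀ v : ℝ → Fin n → ℝ, ContDiff ℝ 1 v → v 0 = v T →
      (∃ t ∈ Icc (0:ℝ) T, v t ≠ 0) →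
      0 < ∫ t in (0:ℝ)..T,
        (v t ⬝ᵥ (P t).mulVec (v t) + 2 * (deriv v t ⬝ᵥ (Q t).mulVec (v t))
          + deriv v t ⬝ᵥ (R t).mulVec (deriv v t)) := by
  intro v hv hper hne
  have hcont {F : ℝ → Matrix (Fin n) (Fin n) ℝ}
      (hF : ∀ i j, ContDiffOn ℝ 1 (fun t => F t i j) (Icc 0 T)) : ContinuousOn F (Icc 0 T) :=
    continuousOn_matrix fun i j => (hF i j).continuousOn
  have hRs : ∀ t ∈ Icc 0 T, (R t)ᵀ = R t :=
    fun t ht => (isHermitian_iff_isSymm.1 (hL' t ht).isHermitian).eq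
  have hRdet : ∀ t ∈ Icc 0 T, IsUnit (R t).det := fun t ht => (hL' t ht).det_pos.ne'.isUnit
  have hRiccati : ∀ t ∈ Icc 0 T, ∀ i j, HasDerivAt (fun s => W s i j)
      ((P t - (Q t - W t)ᵀ * (R t)⁻¹ * (Q t - W t)) i j) t := by
    intro t ht
    simpa only [hA, hB, hC, riccati_rhs_eq _ _ _ _ (hRs t ht) (hWs t ht).eq] using hW t ht
  rw [integral_quadForm_eq_integral_sq_add hT.le (hcont hPc) (hcont hQc) (hcont hRc) hRs hRdet
    (fun t ht => (hWs t ht).eq) hRiccati hv, ← hper, ← dotProduct_sub, ← sub_mulVec]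
  have hWc : ContinuousOn W (Icc 0 T) :=
    continuousOn_matrix fun i j t ht => (hW t ht i j).continuousAt.continuousWithinAt
  have hMc : ContinuousOn (fun t => (R t)⁻¹ * (Q t - W t)) (Icc 0 T) :=
    ((hcont hRc).matrix_inv fun t ht => (hRdet t ht).ne_zero).mul ((hcont hQc).sub hWc)
  exact integral_sq_add_pos hT (hcont hRc) hL' hMc hWbc hv hne

/-- Under the strengthened Legendre condition (L') (`R(t) > 0` on `[0,T]`),
with `A = −R⁻¹Q`, `B = R⁻¹`, `C = P − QᵀR⁻¹Q`, if condition (SR) holds — there is a `C¹`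
symmetric solution `W` of the Riccati equation `Ẇ − C + WA + AᵀW + WBW = 0` on all of
`[0,T]` with `W(T) − W(0)` positive definite — then `Q(v) > 0` for every nonzero `C¹`
`T`-periodic `v`. -/
theorem stmt_5 (n : ℕ) (hn : 0 < n) (T : ℝ) (hT : 0 < T)
    (P Q R : ℝ → Matrix (Fin n) (Fin n) ℝ)
    (hPc : ∀ i j, ContDiffOn ℝ 1 (fun t => P t i j) (Icc 0 T))
    (hQc : ∀ i j, ContDiffOn ℝ 1 (fun t => Q t i j) (Icc 0 T))
    (hRc : ∀ i j, ContDiffOn ℝ 1 (fun t => R t i j) (Icc 0 T))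
    (hPs : ∀ t ∈ Icc (0:ℝ) T, (P t).IsSymm)
    (hRs : ∀ t ∈ Icc (0:ℝ) T, (R t).IsSymm)
    (hL' : ∀ t ∈ Icc (0:ℝ) T, (R t).PosDef)
    (A B C : ℝ → Matrix (Fin n) (Fin n) ℝ)
    (hA : ∀ t, A t = -(R t)⁻¹ * Q t)
    (hB : ∀ t, B t = (R t)⁻¹)
    (hC : ∀ t, C t = P t - (Q t)ᵀ * (R t)⁻¹ * Q t)
    (W : ℝ → Matrix (Fin n) (Fin n) ℝ)
    (hWc : ∀ i j, ContDiffOn ℝ 1 (fun t => W t i j) (Icc 0 T))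
    (hWs : ∀ t ∈ Icc (0:ℝ) T, (W t).IsSymm)
    (hW : ∀ t ∈ Icc (0:ℝ) T, ∀ i j,
      HasDerivAt (fun s => W s i j)
        ((C t - W t * A t - (A t)ᵀ * W t - W t * B t * W t) i j) t)
    (hWbc : (W T - W 0).PosDef) :
    ∀ v : ℝ → Fin n → ℝ, ContDiff ℝ 1 v → v 0 = v T →
      (∃ t ∈ Icc (0:ℝ) T, v t ≠ 0) →
      0 < ∫ t in (0:ℝ)..T,
        (v t ⬝ᵥ (P t).mulVec (v t) + 2 * (deriv v t ⬝ᵥ (Q t).mulVec (v t))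
          + deriv v t ⬝ᵥ (R t).mulVec (deriv v t)) :=
  stmt_5_general n T hT P Q R hPc hQc hRc hL' A B C hA hB hC W hWs hW hWbc
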